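/- For the rooted binary trees T_a = (((((2,3),4),5),6),1) and T_b = ((((2,6),(3,4)),5),1) on taxon set {1,…,6}: the maximum over all characters f of (l_f(T_b) − l_f(T_a)) equals 2, and the maximum over all characters f of (l_f(T_a) − l_f(T_b)) equals 1. Consequently d_MP(T_a,T_b) = 2, gap(T_a,T_b) = 1, and every optimal character f satisfies l_f(T_b) = l_f(T_a) + 2. -/

import Mathlib

/-!
Parsimony scores are computed by Fitch's algorithm, proved correct against the definition.
Merging states never raises a score, so renaming each state after the least taxon carrying
it leaves all scores unchanged. On six taxa this leaves the 720 characters with `f 0 = 0`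
and `f x ≤ x`, on which the kernel checks `l_f(T_b) ≤ l_f(T_a) + 2` and
`l_f(T_a) ≤ l_f(T_b) + 1`. Two explicit characters attain both bounds.
-/

namespace MPDist

/-- A rooted binary phylogenetic tree: leaves are labelled by taxa,
every internal vertex (including the root) has exactly two children. -/
inductive PTree (X : Type) : Type
  | leaf : X → PTree X
  | node : PTree X → PTree X → PTree X

namespace PTree

/-- The list of leaf labels (taxa) of a tree. -/
def leaves {X : Type} : PTree X → List X
  | .leaf x => [x]
  | .node l r => l.leaves ++ r.leaves

/-- Relabelling of taxa. -/
def map {X Y : Type} (φ : X → Y) : PTree X → PTree Y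
  | .leaf x => .leaf (φ x)
  | .node l r => .node (l.map φ) (r.map φ)

end PTree

/-- `T` is a phylogenetic tree on the taxon set `X`:
its leaves are bijectively labelled by the elements of `X`. -/
def IsPhylo {X : Type} (T : PTree X) : Prop :=
  T.leaves.Nodup ∧ ∀ x : X, x ∈ T.leaves

/-- A state-labelled binary tree (an extension assigns a state to every vertex). -/
inductive ETree (C : Type) : Type
  | leaf : C → ETree C
  | node : C → ETree C → ETree C → ETree C

namespace ETree

/-- The state at the root. -/
def root {C : Type} : ETree C → C
  | .leaf c => c
  | .node c _ _ => c

/-- The number of edges `{u,v}` with different states at the two endpoints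
(substitutions/mutations). -/
def changes {C : Type} [DecidableEq C] : ETree C → ℕ
  | .leaf _ => 0
  | .node c l r =>
      ((if l.root = c then 0 else 1) + (if r.root = c then 0 else 1)) +
        (l.changes + r.changes)

end ETree

/-- `g` is an extension of the character `f` to the tree `T`: it has the same
shape as `T`, assigns a state to every vertex, and agrees with `f` on the taxa. -/
inductive IsExtension {X C : Type} (f : X → C) : PTree X → ETree C → Prop
  | leaf (x : X) : IsExtension f (.leaf x) (.leaf (f x))
  | node {l r : PTree X} {gl gr : ETree C} (c : C) :
      IsExtension f l gl → IsExtension f r gr →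
      IsExtension f (.node l r) (.node c gl gr)

/-- The parsimony score `l_f(T)`: the minimum number of mutation edges
over all extensions of `f` to `T`. -/
noncomputable def pscore {X C : Type} [DecidableEq C] (f : X → C) (T : PTree X) : ℕ :=
  sInf { k : ℕ | ∃ g : ETree C, IsExtension f T g ∧ g.changes = k }

/-- The MP distance `d_MP(T1,T2) = max_f |l_f(T1) − l_f(T2)|`, the maximum taken
over all characters `f` on the taxon set (states drawn from `ℕ`). -/
noncomputable def dMP {X : Type} (T1 T2 : PTree X) : ℕ :=
  sSup { k : ℕ | ∃ f : X → ℕ, k = ((pscore f T1 : ℤ) - (pscore f T2 : ℤ)).natAbs }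

/-- `d^i_MP(T1,T2)`: as `dMP`, but over characters using at most `i` states. -/
noncomputable def dMPk {X : Type} (i : ℕ) (T1 T2 : PTree X) : ℕ :=
  sSup { k : ℕ | ∃ f : X → Fin i, k = ((pscore f T1 : ℤ) - (pscore f T2 : ℤ)).natAbs }

/-- `max_f (l_f(T2) − l_f(T1))` over all characters `f`. -/
noncomputable def maxDiff {X : Type} (T1 T2 : PTree X) : ℤ :=
  sSup { d : ℤ | ∃ f : X → ℕ, d = (pscore f T2 : ℤ) - (pscore f T1 : ℤ) }

/-- `max_f (l_f(T2) − l_f(T1))` over all characters `f` with at most `i` states. -/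
noncomputable def maxDiffk {X : Type} (i : ℕ) (T1 T2 : PTree X) : ℤ :=
  sSup { d : ℤ | ∃ f : X → Fin i, d = (pscore f T2 : ℤ) - (pscore f T1 : ℤ) }

/-- `gap(T1,T2) = |max_f(l_f(T2)−l_f(T1)) − max_f(l_f(T1)−l_f(T2))|`. -/
noncomputable def gap {X : Type} (T1 T2 : PTree X) : ℤ :=
  |maxDiff T1 T2 - maxDiff T2 T1|

/-- `gap` restricted to characters with at most `i` states. -/
noncomputable def gapk {X : Type} (i : ℕ) (T1 T2 : PTree X) : ℤ :=
  |maxDiffk i T1 T2 - maxDiffk i T2 T1|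

/-- `s` occurs as a (rooted) subtree of `t`. -/
inductive IsSubtree {X : Type} : PTree X → PTree X → Prop
  | refl (t : PTree X) : IsSubtree t t
  | left {s l r : PTree X} : IsSubtree s l → IsSubtree s (.node l r)
  | right {s l r : PTree X} : IsSubtree s r → IsSubtree s (.node l r)

/-- Taxa `a`, `b` form a cherry of `T`: they are leaves with a common parent. -/
def IsCherry {X : Type} (T : PTree X) (a b : X) : Prop :=
  IsSubtree (.node (.leaf a) (.leaf b)) T

/-- Relabel a tree on taxa `ℕ` by shifting all labels up by `s` (fresh copies). -/
def shiftT (s : ℕ) (T : PTree ℕ) : PTree ℕ := T.map (fun x => x + s)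

/-- `T_a = (((((2,3),4),5),6),1)` on taxa `{1,…,6}` (taxon `j` encoded as `j-1`). -/
def Ta6 : PTree ℕ :=
  .node (.node (.node (.node (.node (.leaf 1) (.leaf 2)) (.leaf 3)) (.leaf 4)) (.leaf 5)) (.leaf 0)

/-- `T_b = ((((2,6),(3,4)),5),1)` on taxa `{1,…,6}` (taxon `j` encoded as `j-1`). -/
def Tb6 : PTree ℕ :=
  .node (.node (.node (.node (.leaf 1) (.leaf 5)) (.node (.leaf 2) (.leaf 3))) (.leaf 4)) (.leaf 0)

/-- `T_A`: two disjoint copies of `T_a` joined under a new root (12 taxa). -/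
def TA12 : PTree ℕ := .node Ta6 (shiftT 6 Ta6)

/-- `T_B`: two disjoint copies of `T_b` joined under a new root (12 taxa). -/
def TB12 : PTree ℕ := .node Tb6 (shiftT 6 Tb6)

/-- `TkA k` is the tree `T^{k+1}_A`: `k+1` disjoint copies of `T_A` arranged
along a caterpillar backbone (so `TkA 0 = T^1_A = T_A`). -/
def TkA : ℕ → PTree ℕ
  | 0 => TA12
  | k+1 => .node (TkA k) (shiftT (12*(k+1)) TA12)

/-- `TkB k` is the tree `T^{k+1}_B`. -/
def TkB : ℕ → PTree ℕ
  | 0 => TB12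
  | k+1 => .node (TkB k) (shiftT (12*(k+1)) TB12)

/-- `T_a = (((5,(6,4)),3),((1,(8,2)),7))` on taxa `{1,…,8}` (taxon `j` encoded as `j-1`). -/
def Ta8 : PTree ℕ :=
  .node (.node (.node (.leaf 4) (.node (.leaf 5) (.leaf 3))) (.leaf 2))
        (.node (.node (.leaf 0) (.node (.leaf 7) (.leaf 1))) (.leaf 6))

/-- `T_b = (((7,((4,2),6)),3),(8,(1,5)))` on taxa `{1,…,8}` (taxon `j` encoded as `j-1`). -/
def Tb8 : PTree ℕ :=
  .node (.node (.node (.leaf 6) (.node (.node (.leaf 3) (.leaf 1)) (.leaf 5))) (.leaf 2))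
        (.node (.leaf 7) (.node (.leaf 0) (.leaf 4)))

/-- `T_A` (2-state construction): two disjoint copies of `T_a` under a new root (16 taxa). -/
def TA16 : PTree ℕ := .node Ta8 (shiftT 8 Ta8)

/-- `T_B` (2-state construction): two disjoint copies of `T_b` under a new root (16 taxa). -/
def TB16 : PTree ℕ := .node Tb8 (shiftT 8 Tb8)

/-- `T_AA`: two disjoint copies of `T_A` under a new root (32 taxa). -/
def TAA : PTree ℕ := .node TA16 (shiftT 16 TA16)

/-- `T_BB`: two disjoint copies of `T_B` under a new root (32 taxa). -/
def TBB : PTree ℕ := .node TB16 (shiftT 16 TB16)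

/-- `TkAA k` is the tree `T^{k+1}_AA` (so `TkAA 0 = T^1_AA = T_AA`). -/
def TkAA : ℕ → PTree ℕ
  | 0 => TAA
  | k+1 => .node (TkAA k) (shiftT (32*(k+1)) TAA)

/-- `TkBB k` is the tree `T^{k+1}_BB`. -/
def TkBB : ℕ → PTree ℕ
  | 0 => TBB
  | k+1 => .node (TkBB k) (shiftT (32*(k+1)) TBB)

namespace ETree

variable {C D : Type}

def map (σ : C → D) : ETree C → ETree D
  | .leaf c => .leaf (σ c)
  | .node c l r => .node (σ c) (l.map σ) (r.map σ)

@[simp]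
lemma root_node (c : C) (l r : ETree C) : (node c l r).root = c := rfl

@[simp]
lemma root_map (σ : C → D) (g : ETree C) : (g.map σ).root = σ g.root := by
  cases g <;> rfl

lemma changes_map_le [DecidableEq C] [DecidableEq D] (σ : C → D) (g : ETree C) :
    (g.map σ).changes ≤ g.changes := by
  induction g with
  | leaf c => exact le_rfl
  | node c l r ihl ihr =>
    simp only [map, changes, root_map]
    have hl : (if σ l.root = σ c then 0 else 1) ≤ if l.root = c then 0 else 1 := by
      split_ifs <;> simp_all
    have hr : (if σ r.root = σ c then 0 else 1) ≤ if r.root = c then 0 else 1 := by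
      split_ifs <;> simp_all
    omega

end ETree

section Fitch

variable {X C : Type} [DecidableEq C]

/-- The state sets of Fitch's bottom-up pass. -/
def fitchSet (f : X → C) : PTree X → Finset C
  | .leaf x => {f x}
  | .node l r =>
      if (fitchSet f l ∩ fitchSet f r).Nonempty then fitchSet f l ∩ fitchSet f r
      else fitchSet f l ∪ fitchSet f r

def fitchScore (f : X → C) : PTree X → ℕ
  | .leaf _ => 0
  | .node l r =>
      fitchScore f l + fitchScore f r + if (fitchSet f l ∩ fitchSet f r).Nonempty then 0 else 1

lemma fitchSet_nonempty (f : X → C) (T : PTree X) : (fitchSet f T).Nonempty := by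
  induction T with
  | leaf x => exact Finset.singleton_nonempty _
  | node l r ihl _ =>
    rw [fitchSet]
    split_ifs with h
    · exact h
    · exact ihl.mono Finset.subset_union_left

/-- Fitch's lower bound: an extension pays `fitchScore`, and one more change if its root state
lies outside `fitchSet`. -/
lemma IsExtension.fitchScore_add_le {f : X → C} {T : PTree X} {g : ETree C}
    (hg : IsExtension f T g) :
    fitchScore f T + (if g.root ∈ fitchSet f T then 0 else 1) ≤ g.changes := by
  induction hg with
  | leaf x => simp [fitchSet, fitchScore, ETree.root, ETree.changes]
  | @node l r gl gr c _ _ ihl ihr =>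
    simp only [fitchSet, fitchScore, ETree.changes, ETree.root_node]
    have step : ∀ (F : Finset C) (a : C),
        (if c ∈ F then 0 else 1) ≤ (if a ∈ F then 0 else 1) + (if a = c then 0 else 1) := by
      intro F a
      split_ifs <;> simp_all
    have hl := step (fitchSet f l) gl.root
    have hr := step (fitchSet f r) gr.root
    by_cases hI : (fitchSet f l ∩ fitchSet f r).Nonempty
    · have hc : (if c ∈ fitchSet f l ∩ fitchSet f r then 0 else 1) ≤
          (if c ∈ fitchSet f l then 0 else 1) + (if c ∈ fitchSet f r then 0 else 1) := by
        split_ifs <;> simp_all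
      simp only [if_pos hI]
      omega
    · have hc : 1 + (if c ∈ fitchSet f l ∪ fitchSet f r then 0 else 1) ≤
          (if c ∈ fitchSet f l then 0 else 1) + (if c ∈ fitchSet f r then 0 else 1) := by
        have : c ∉ fitchSet f l ∨ c ∉ fitchSet f r := by
          by_contra! h
          exact hI ⟨c, Finset.mem_inter.2 h⟩
        split_ifs <;> simp_all
      simp only [if_neg hI]
      omega

lemma exists_isExtension_of_mem_fitchSet (f : X → C) (T : PTree X) {c : C}
    (hc : c ∈ fitchSet f T) :
    ∃ g : ETree C, IsExtension f T g ∧ g.root = c ∧ g.changes = fitchScore f T := by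
  induction T generalizing c with
  | leaf x =>
    obtain rfl : c = f x := Finset.mem_singleton.1 hc
    exact ⟨.leaf (f x), .leaf x, rfl, rfl⟩
  | node l r ihl ihr =>
    simp only [fitchSet] at hc
    simp only [fitchScore]
    split_ifs at hc ⊢ with hI
    · obtain ⟨gl, el, rfl, hl⟩ := ihl (Finset.mem_inter.1 hc).1
      obtain ⟨gr, er, hrc, hr⟩ := ihr (Finset.mem_inter.1 hc).2
      exact ⟨.node gl.root gl gr, .node _ el er, rfl, by simp [ETree.changes, hrc, hl, hr]⟩
    -- The two state sets are disjoint: the child whose root is not in state `c` costs a change.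
    · have cross : ∀ {a b : C}, a ∈ fitchSet f l → b ∈ fitchSet f r → a ≠ b := by
        rintro a _ ha hb rfl
        exact hI ⟨a, Finset.mem_inter.2 ⟨ha, hb⟩⟩
      obtain ⟨b, hb⟩ := fitchSet_nonempty f r
      obtain ⟨a, ha⟩ := fitchSet_nonempty f l
      rcases Finset.mem_union.1 hc with hcl | hcr
      · obtain ⟨gl, el, rfl, hl⟩ := ihl hcl
        obtain ⟨gr, er, rfl, hr⟩ := ihr hb
        refine ⟨.node gl.root gl gr, .node _ el er, rfl, ?_⟩
        simp [ETree.changes, (cross hcl hb).symm, hl, hr]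
        omega
      · obtain ⟨gr, er, rfl, hr⟩ := ihr hcr
        obtain ⟨gl, el, rfl, hl⟩ := ihl ha
        refine ⟨.node gr.root gl gr, .node _ el er, rfl, ?_⟩
        simp [ETree.changes, cross ha hcr, hl, hr]
        omega

theorem pscore_eq_fitchScore (f : X → C) (T : PTree X) : pscore f T = fitchScore f T := by
  obtain ⟨c, hc⟩ := fitchSet_nonempty f T
  obtain ⟨g, hg, -, hgc⟩ := exists_isExtension_of_mem_fitchSet f T hc
  refine le_antisymm (Nat.sInf_le ⟨g, hg, hgc⟩) (le_csInf ⟨_, g, hg, rfl⟩ ?_)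
  rintro _ ⟨g', hg', rfl⟩
  exact le_of_add_le_left hg'.fitchScore_add_le

lemma exists_isExtension_changes_eq_pscore (f : X → C) (T : PTree X) :
    ∃ g : ETree C, IsExtension f T g ∧ g.changes = pscore f T := by
  obtain ⟨c, hc⟩ := fitchSet_nonempty f T
  obtain ⟨g, hg, -, hgc⟩ := exists_isExtension_of_mem_fitchSet f T hc
  exact ⟨g, hg, hgc.trans (pscore_eq_fitchScore f T).symm⟩

end Fitch

section Relabel

variable {X C D : Type}

lemma IsExtension.map {f : X → C} {f' : X → D} {σ : C → D} {T : PTree X} {g : ETree C}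
    (hg : IsExtension f T g) (h : ∀ x ∈ T.leaves, f' x = σ (f x)) :
    IsExtension f' T (g.map σ) := by
  induction hg with
  | leaf x => simpa [ETree.map, h x (by simp [PTree.leaves])] using IsExtension.leaf (f := f') x
  | node c _ _ ihl ihr =>
    exact .node _ (ihl fun x hx => h x (by simp [PTree.leaves, hx]))
      (ihr fun x hx => h x (by simp [PTree.leaves, hx]))

variable [DecidableEq C] [DecidableEq D]

lemma pscore_le_of_eq_comp {f : X → C} {f' : X → D} (σ : C → D) {T : PTree X}
    (h : ∀ x ∈ T.leaves, f' x = σ (f x)) : pscore f' T ≤ pscore f T := by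
  obtain ⟨g, hg, hgc⟩ := exists_isExtension_changes_eq_pscore f T
  calc pscore f' T ≤ (g.map σ).changes := Nat.sInf_le ⟨_, hg.map h, rfl⟩
    _ ≤ g.changes := g.changes_map_le σ
    _ = pscore f T := hgc

lemma pscore_congr {f f' : X → C} {T : PTree X} (h : ∀ x ∈ T.leaves, f x = f' x) :
    pscore f T = pscore f' T :=
  le_antisymm (pscore_le_of_eq_comp id h) (pscore_le_of_eq_comp id fun x hx => (h x hx).symm)

end Relabel

section Canonical

variable {C : Type}

open Classical in
/-- The least taxon in state `c` (`0` if there is none). -/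
noncomputable def leastPreimage (f : ℕ → C) (c : C) : ℕ :=
  if h : ∃ i, f i = c then Nat.find h else 0

lemma leastPreimage_apply_le (f : ℕ → C) (x : ℕ) : leastPreimage f (f x) ≤ x := by
  classical
  rw [leastPreimage, dif_pos ⟨x, rfl⟩]
  exact Nat.find_min' _ rfl

lemma apply_leastPreimage_apply (f : ℕ → C) (x : ℕ) : f (leastPreimage f (f x)) = f x := by
  classical
  rw [leastPreimage, dif_pos ⟨x, rfl⟩]
  exact Nat.find_spec (p := fun i => f i = f x) ⟨x, rfl⟩

lemma pscore_leastPreimage_comp [DecidableEq C] (f : ℕ → C) (T : PTree ℕ) :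
    pscore (leastPreimage f ∘ f) T = pscore f T :=
  le_antisymm (pscore_le_of_eq_comp _ fun _ _ => rfl)
    (pscore_le_of_eq_comp f fun x _ => (apply_leastPreimage_apply f x).symm)

end Canonical

def listChar (l : List ℕ) : ℕ → ℕ := fun x => l.getD x 0

lemma exists_pscore_eq_listChar (f : ℕ → ℕ) :
    ∃ b < 2, ∃ c < 3, ∃ d < 4, ∃ e < 5, ∃ g < 6,
      ∀ T : PTree ℕ, (∀ x ∈ T.leaves, x < 6) →
        pscore f T = pscore (listChar [0, b, c, d, e, g]) T := by
  set r : ℕ → ℕ := leastPreimage f ∘ f with hr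
  have hle (x : ℕ) : r x < x + 1 := Nat.lt_succ_of_le (leastPreimage_apply_le f x)
  have hr0 : r 0 = 0 := by simpa using hle 0
  refine ⟨r 1, hle 1, r 2, hle 2, r 3, hle 3, r 4, hle 4, r 5, hle 5, fun T hT => ?_⟩
  rw [← pscore_leastPreimage_comp, ← hr]
  refine pscore_congr fun x hx => ?_
  have := hT x hx
  interval_cases x <;> simp [listChar, hr0]

lemma fitchScore_Ta6_Tb6_bounds :
    ∀ b < 2, ∀ c < 3, ∀ d < 4, ∀ e < 5, ∀ g < 6,
      fitchScore (listChar [0, b, c, d, e, g]) Tb6 ≤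
          fitchScore (listChar [0, b, c, d, e, g]) Ta6 + 2 ∧
        fitchScore (listChar [0, b, c, d, e, g]) Ta6 ≤
          fitchScore (listChar [0, b, c, d, e, g]) Tb6 + 1 := by
  decide +kernel

lemma pscore_Ta6_Tb6_bounds (f : ℕ → ℕ) :
    pscore f Tb6 ≤ pscore f Ta6 + 2 ∧ pscore f Ta6 ≤ pscore f Tb6 + 1 := by
  obtain ⟨b, hb, c, hc, d, hd, e, he, g, hg, hf⟩ := exists_pscore_eq_listChar f
  rw [hf Ta6 (by decide), hf Tb6 (by decide), pscore_eq_fitchScore, pscore_eq_fitchScore]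
  exact fitchScore_Ta6_Tb6_bounds b hb c hc d hd e he g hg

lemma exists_pscore_Tb6_eq_add_two : ∃ f : ℕ → ℕ, pscore f Tb6 = pscore f Ta6 + 2 :=
  ⟨listChar [0, 1, 1, 2, 2, 0], by simp only [pscore_eq_fitchScore]; decide +kernel⟩

lemma exists_pscore_Ta6_eq_add_one : ∃ f : ℕ → ℕ, pscore f Ta6 = pscore f Tb6 + 1 :=
  ⟨listChar [0, 0, 1, 1, 0, 0], by simp only [pscore_eq_fitchScore]; decide +kernel⟩

/-- for `T_a = (((((2,3),4),5),6),1)` and `T_b = ((((2,6),(3,4)),5),1)`: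
`max_f (l_f(T_b) − l_f(T_a)) = 2`, `max_f (l_f(T_a) − l_f(T_b)) = 1`, hence
`d_MP(T_a,T_b) = 2`, `gap(T_a,T_b) = 1`, and every optimal character `f`
satisfies `l_f(T_b) = l_f(T_a) + 2`. -/
theorem Ta6_Tb6_asymmetric :
    maxDiff Ta6 Tb6 = 2 ∧
    maxDiff Tb6 Ta6 = 1 ∧
    dMP Ta6 Tb6 = 2 ∧
    gap Ta6 Tb6 = 1 ∧
    (∀ f : ℕ → ℕ,
      ((pscore f Ta6 : ℤ) - (pscore f Tb6 : ℤ)).natAbs = dMP Ta6 Tb6 →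
      (pscore f Tb6 : ℤ) = (pscore f Ta6 : ℤ) + 2) := by
  obtain ⟨f₂, hf₂⟩ := exists_pscore_Tb6_eq_add_two
  obtain ⟨f₁, hf₁⟩ := exists_pscore_Ta6_eq_add_one
  have hbound := pscore_Ta6_Tb6_bounds
  have hmax₂ : maxDiff Ta6 Tb6 = 2 := IsGreatest.csSup_eq
    ⟨⟨f₂, by omega⟩, by rintro _ ⟨f, rfl⟩; have := hbound f; omega⟩
  have hmax₁ : maxDiff Tb6 Ta6 = 1 := IsGreatest.csSup_eq
    ⟨⟨f₁, by omega⟩, by rintro _ ⟨f, rfl⟩; have := hbound f; omega⟩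
  have hdMP : dMP Ta6 Tb6 = 2 := IsGreatest.csSup_eq
    ⟨⟨f₂, by omega⟩, by rintro _ ⟨f, rfl⟩; have := hbound f; omega⟩
  refine ⟨hmax₂, hmax₁, hdMP, by simp [gap, hmax₂, hmax₁], fun f hf => ?_⟩
  have := hbound f
  omega

end MPDist
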